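/- Let ε_{ij} ∈ [0,1] for i,j ∈ V = {1,…,n}. Let X_i, i ∈ V, be i.i.d. Bernoulli(1/2) and, given the X's, let Y_j for a cut Ω and each j ∈ Ωᶜ receive from each i ∈ Ω independently either X_i (with probability 1 − ε_{ij}) or an erasure symbol e (with probability ε_{ij}), with all erasure events independent. Then I(X_Ω ; Y_{Ωᶜ} | X_{Ωᶜ}) = Σ_{i ∈ Ω} (1 − Π_{j ∈ Ωᶜ} ε_{ij}). -/

import Mathlib

open Finset

/-- Probability that the random variable `Z` takes the value `z`. -/
noncomputable def prob' {Ω : Type*} [Fintype Ω] (μ : Ω → ℝ) {α : Type*} [DecidableEq α]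
    (Z : Ω → α) (z : α) : ℝ :=
  ∑ ω ∈ Finset.univ.filter (fun ω => Z ω = z), μ ω

/-- Shannon entropy (base 2) of a finitely-valued random variable. -/
noncomputable def ent' {Ω : Type*} [Fintype Ω] (μ : Ω → ℝ) {α : Type*} [Fintype α]
    [DecidableEq α] (Z : Ω → α) : ℝ :=
  -∑ z : α, prob' μ Z z * Real.logb 2 (prob' μ Z z)

/-- Conditional Shannon entropy `H(Z | W) = H(Z, W) − H(W)`. -/
noncomputable def condEnt' {Ω : Type*} [Fintype Ω] (μ : Ω → ℝ) {α β : Type*}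
    [Fintype α] [DecidableEq α] [Fintype β] [DecidableEq β]
    (Z : Ω → α) (W : Ω → β) : ℝ :=
  ent' μ (fun ω => (Z ω, W ω)) - ent' μ W

/-- Conditional mutual information `I(X ; Y | Z) = H(X|Z) + H(Y|Z) − H(X,Y|Z)`. -/
noncomputable def condMI' {Ω : Type*} [Fintype Ω] (μ : Ω → ℝ) {α β γ : Type*}
    [Fintype α] [DecidableEq α] [Fintype β] [DecidableEq β] [Fintype γ] [DecidableEq γ]
    (X : Ω → α) (Y : Ω → β) (Z : Ω → γ) : ℝ :=
  condEnt' μ X Z + condEnt' μ Y Z - condEnt' μ (fun ω => (X ω, Y ω)) Z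

/-!
Reindex the sample space by nodes: node `i` owns its bit `X_i` and its row of erasure
indicators, and the weights factor over nodes. Each of `X_Ω`, `Y_{Ωᶜ}`, `X_{Ωᶜ}` has the same
fibres as the tuple of per-node observations, and entropy only depends on the fibres, so the
conditional mutual information is a sum of per-node terms. A node outside `Ω` contributes
nothing. For `i ∈ Ω` the conditioning is trivial, `H(X_i) = 1`, and what `Ωᶜ` receives from `i`
determines the erasure pattern together with `X_i`, except that `X_i` is lost when every link
into `Ωᶜ` is erased: this costs exactly `P(all erased) = ∏_{j ∈ Ωᶜ} ε_{ij}` bits, so node `i`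
contributes `1 - ∏_{j ∈ Ωᶜ} ε_{ij}`.
-/

theorem Setoid.ker_prodMk {S α α' β β' : Type*} {V : S → α} {V' : S → α'} {W : S → β}
    {W' : S → β'} (hV : Setoid.ker V = Setoid.ker V') (hW : Setoid.ker W = Setoid.ker W') :
    Setoid.ker (fun ω => (V ω, W ω)) = Setoid.ker (fun ω => (V' ω, W' ω)) := by
  ext ω ω'
  rw [Setoid.ker_def, Setoid.ker_def, Prod.mk.injEq, Prod.mk.injEq, ← Setoid.ker_def (f := V), hV,
    ← Setoid.ker_def (f := W), hW, Setoid.ker_def, Setoid.ker_def]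

theorem Setoid.ker_prodMk_pi {S ι : Type*} {α β : ι → Type*} (U : S → ∀ i, α i)
    (V : S → ∀ i, β i) :
    Setoid.ker (fun ω => (U ω, V ω)) = Setoid.ker (fun ω i => (U ω i, V ω i)) := by
  ext ω ω'
  simp only [Setoid.ker_def, Prod.mk.injEq, funext_iff, forall_and]

theorem Setoid.ker_const_prodMk {S α β : Type*} (a : α) (V : S → β) :
    Setoid.ker (fun ω => (a, V ω)) = Setoid.ker V := by
  ext ω ω'
  simp only [Setoid.ker_def, Prod.mk.injEq, true_and]

theorem Setoid.ker_prodMk_const {S α β : Type*} (V : S → α) (b : β) :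
    Setoid.ker (fun ω => (V ω, b)) = Setoid.ker V := by
  ext ω ω'
  simp only [Setoid.ker_def, Prod.mk.injEq, and_true]

section Entropy

variable {S : Type*} [Fintype S] (μ : S → ℝ) {α β γ : Type*}

theorem prob'_comp_equiv {T : Type*} [Fintype T] [DecidableEq α] (e : T ≃ S) (V : S → α) :
    prob' (μ ∘ e) (V ∘ e) = prob' μ V := by
  funext a
  simp only [prob', Finset.sum_filter]
  exact e.sum_comp fun ω => if V ω = a then μ ω else 0

theorem le_prob'_apply [DecidableEq α] (hμ : 0 ≤ μ) (V : S → α) (ω : S) :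
    μ ω ≤ prob' μ V (V ω) :=
  Finset.single_le_sum (fun ω' _ => hμ ω') (by simp)

variable [Fintype α] [DecidableEq α] [Fintype β] [DecidableEq β] [Fintype γ] [DecidableEq γ]

theorem ent'_comp_equiv {T : Type*} [Fintype T] (e : T ≃ S) (V : S → α) :
    ent' (μ ∘ e) (V ∘ e) = ent' μ V := by
  rw [ent', ent', prob'_comp_equiv]

theorem condMI'_comp_equiv {T : Type*} [Fintype T] (e : T ≃ S)
    (X : S → α) (Y : S → β) (Z : S → γ) :
    condMI' (μ ∘ e) (X ∘ e) (Y ∘ e) (Z ∘ e) = condMI' μ X Y Z := by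
  simp only [condMI', condEnt']
  rw [← ent'_comp_equiv μ e Z, ← ent'_comp_equiv μ e fun ω => (X ω, Z ω),
    ← ent'_comp_equiv μ e fun ω => (Y ω, Z ω),
    ← ent'_comp_equiv μ e fun ω => ((X ω, Y ω), Z ω)]
  rfl

theorem ent'_eq_neg_sum (V : S → α) :
    ent' μ V = -∑ ω, μ ω * Real.logb 2 (prob' μ V (V ω)) := by
  rw [ent', ← Finset.sum_fiberwise Finset.univ V]
  congr 1
  refine Finset.sum_congr rfl fun a _ => ?_
  exact (Finset.sum_mul _ _ _).trans
    (Finset.sum_congr rfl fun ω hω => by rw [(Finset.mem_filter.1 hω).2])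

theorem ent'_const (hμ : ∑ ω, μ ω = 1) (a : α) : ent' μ (fun _ => a) = 0 := by
  have hprob : prob' μ (fun _ => a) a = 1 := by simpa [prob'] using hμ
  simp [ent'_eq_neg_sum, hprob]

theorem ent'_congr {V : S → α} {W : S → β} (h : Setoid.ker V = Setoid.ker W) :
    ent' μ V = ent' μ W := by
  have hfib (ω : S) : prob' μ V (V ω) = prob' μ W (W ω) := by
    refine Finset.sum_congr (Finset.filter_congr fun ω' _ => ?_) fun _ _ => rfl
    rw [← Setoid.ker_def, h, Setoid.ker_def]
  simp only [ent'_eq_neg_sum, hfib]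

theorem condEnt'_congr {δ : Type*} [Fintype δ] [DecidableEq δ] {V : S → α} {V' : S → β}
    {W : S → γ} {W' : S → δ} (hV : Setoid.ker V = Setoid.ker V')
    (hW : Setoid.ker W = Setoid.ker W') :
    condEnt' μ V W = condEnt' μ V' W' := by
  rw [condEnt', condEnt', ent'_congr μ (Setoid.ker_prodMk hV hW), ent'_congr μ hW]

theorem condMI'_congr {α' β' γ' : Type*} [Fintype α'] [DecidableEq α'] [Fintype β']
    [DecidableEq β'] [Fintype γ'] [DecidableEq γ'] {X : S → α} {X' : S → α'} {Y : S → β}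
    {Y' : S → β'} {Z : S → γ} {Z' : S → γ'} (hX : Setoid.ker X = Setoid.ker X')
    (hY : Setoid.ker Y = Setoid.ker Y') (hZ : Setoid.ker Z = Setoid.ker Z') :
    condMI' μ X Y Z = condMI' μ X' Y' Z' := by
  rw [condMI', condMI', condEnt'_congr μ hX hZ, condEnt'_congr μ hY hZ,
    condEnt'_congr μ (Setoid.ker_prodMk hX hY) hZ]

theorem condMI'_const_left (a : α) (Y : S → β) (Z : S → γ) :
    condMI' μ (fun _ => a) Y Z = 0 := by
  rw [condMI', condEnt', condEnt'_congr μ (Setoid.ker_const_prodMk a Y) rfl,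
    ent'_congr μ (Setoid.ker_const_prodMk a Z)]
  ring

theorem condMI'_const_right (hμ : ∑ ω, μ ω = 1) (X : S → α) (Y : S → β) (c : γ) :
    condMI' μ X Y (fun _ => c) = ent' μ X + ent' μ Y - ent' μ (fun ω => (X ω, Y ω)) := by
  simp only [condMI', condEnt', ent'_congr μ (Setoid.ker_prodMk_const _ c), ent'_const μ hμ]
  ring

end Entropy

section Product

variable {ι : Type*} [Fintype ι] [DecidableEq ι] {κ : ι → Type*} [∀ i, Fintype (κ i)]
  (p : ∀ i, κ i → ℝ)

theorem prob'_pi {α : ι → Type*} [∀ i, DecidableEq (α i)] (f : ∀ i, κ i → α i)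
    (a : ∀ i, α i) :
    prob' (fun g : ∀ i, κ i => ∏ i, p i (g i)) (fun g i => f i (g i)) a =
      ∏ i, prob' (p i) (f i) (a i) := by
  simp only [prob']
  rw [Finset.prod_univ_sum]
  refine Finset.sum_congr ?_ fun _ _ => rfl
  ext g
  simp [Fintype.mem_piFinset, funext_iff]

theorem sum_prod_mul_apply (hp : ∀ i, ∑ a, p i a = 1) (i : ι) (h : κ i → ℝ) :
    ∑ g : ∀ i, κ i, (∏ k, p k (g k)) * h (g i) = ∑ a, p i a * h a := by
  set q := Function.update p i fun a => p i a * h a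
  have hq (g : ∀ i, κ i) : (∏ k, p k (g k)) * h (g i) = ∏ k, q k (g k) := by
    rw [Finset.prod_eq_mul_prod_sdiff_singleton_of_mem (Finset.mem_univ i) fun k => p k (g k)]
    simp only [q, Function.apply_update (fun k (φ : κ k → ℝ) => φ (g k)),
      Finset.prod_update_of_mem (Finset.mem_univ i)]
    ring
  rw [Fintype.sum_congr _ _ hq, ← Fintype.prod_sum, Finset.prod_eq_single i]
  · simp [q]
  · intro k _ hk
    simp [q, Function.update_of_ne hk, hp k]
  · simp

variable {α β γ : ι → Type*} [∀ i, Fintype (α i)] [∀ i, DecidableEq (α i)]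
  [∀ i, Fintype (β i)] [∀ i, DecidableEq (β i)]
  [∀ i, Fintype (γ i)] [∀ i, DecidableEq (γ i)]

theorem ent'_pi (hp0 : ∀ i, 0 ≤ p i) (hp1 : ∀ i, ∑ a, p i a = 1)
    (f : ∀ i, κ i → α i) :
    ent' (fun g : ∀ i, κ i => ∏ i, p i (g i)) (fun g i => f i (g i)) =
      ∑ i, ent' (p i) (f i) := by
  have hlog (g : ∀ i, κ i) :
      (∏ k, p k (g k)) * Real.logb 2 (∏ i, prob' (p i) (f i) (f i (g i))) =
        ∑ i, (∏ k, p k (g k)) * Real.logb 2 (prob' (p i) (f i) (f i (g i))) := by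
    by_cases hg : ∃ i, p i (g i) = 0
    · obtain ⟨i, hi⟩ := hg
      simp [Finset.prod_eq_zero (f := fun k => p k (g k)) (Finset.mem_univ i) hi]
    · simp only [not_exists] at hg
      have hpos (i : ι) : 0 < prob' (p i) (f i) (f i (g i)) :=
        ((hp0 i (g i)).lt_of_ne' (hg i)).trans_le (le_prob'_apply _ (hp0 i) _ _)
      rw [Real.logb_prod _ _ fun i _ => (hpos i).ne', Finset.mul_sum]
  simp only [ent'_eq_neg_sum, prob'_pi, hlog]
  rw [Finset.sum_comm, ← Finset.sum_neg_distrib]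
  exact Finset.sum_congr rfl fun i _ => congrArg Neg.neg
    (sum_prod_mul_apply p hp1 i fun a => Real.logb 2 (prob' (p i) (f i) (f i a)))

theorem condEnt'_pi (hp0 : ∀ i, 0 ≤ p i) (hp1 : ∀ i, ∑ a, p i a = 1)
    (f : ∀ i, κ i → α i) (h : ∀ i, κ i → γ i) :
    condEnt' (fun g : ∀ i, κ i => ∏ i, p i (g i)) (fun g i => f i (g i))
        (fun g i => h i (g i)) =
      ∑ i, condEnt' (p i) (f i) (h i) := by
  rw [condEnt', ent'_congr _ (Setoid.ker_prodMk_pi _ _),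
    ent'_pi p hp0 hp1 fun i a => (f i a, h i a), ent'_pi p hp0 hp1,
    ← Finset.sum_sub_distrib]
  rfl

theorem condMI'_pi (hp0 : ∀ i, 0 ≤ p i) (hp1 : ∀ i, ∑ a, p i a = 1)
    (f : ∀ i, κ i → α i) (f' : ∀ i, κ i → β i) (h : ∀ i, κ i → γ i) :
    condMI' (fun g : ∀ i, κ i => ∏ i, p i (g i)) (fun g i => f i (g i)) (fun g i => f' i (g i))
        (fun g i => h i (g i)) =
      ∑ i, condMI' (p i) (f i) (f' i) (h i) := by
  rw [condMI', condEnt'_congr _ (Setoid.ker_prodMk_pi _ _) rfl, condEnt'_pi p hp0 hp1,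
    condEnt'_pi p hp0 hp1, condEnt'_pi p hp0 hp1 (fun i a => (f i a, f' i a)),
    ← Finset.sum_add_distrib, ← Finset.sum_sub_distrib]
  rfl

end Product

section UniformBit

variable {β γ : Type*} [Fintype β] (q : β → ℝ)

theorem sum_uniformBit (F : Bool × β → ℝ) :
    ∑ ω : Bool × β, q ω.2 / 2 * F ω = ∑ x, q x * ((F (false, x) + F (true, x)) / 2) := by
  rw [Fintype.sum_prod_type, Fintype.sum_bool, ← Finset.sum_add_distrib]
  refine Finset.sum_congr rfl fun x _ => ?_
  ring

theorem sum_uniformBit_weight (hq : ∑ x, q x = 1) : ∑ ω : Bool × β, q ω.2 / 2 = 1 := by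
  simp [Fintype.sum_prod_type, ← Finset.sum_div, hq]

theorem prob'_uniformBit {α : Type*} [DecidableEq α] (V : Bool × β → α) (a : α) :
    prob' (fun ω : Bool × β => q ω.2 / 2) V a =
      ∑ x, q x *
        (((if V (false, x) = a then 1 else 0) + if V (true, x) = a then 1 else 0) / 2) := by
  rw [prob', Finset.sum_filter, Fintype.sum_prod_type, Fintype.sum_bool, ← Finset.sum_add_distrib]
  refine Finset.sum_congr rfl fun x _ => ?_
  split_ifs <;> ring

theorem ent'_fst_uniformBit (hq : ∑ x, q x = 1) :
    ent' (fun ω : Bool × β => q ω.2 / 2) Prod.fst = 1 := by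
  have hhalf (b : Bool) : prob' (fun ω : Bool × β => q ω.2 / 2) Prod.fst b = 1 / 2 := by
    rw [prob'_uniformBit]
    cases b <;> simp [← Finset.sum_mul, hq]
  simp [ent', hhalf]

-- On `{T = c}` erasing the bit merges two equally likely outcomes, which costs one bit there.
theorem ent'_uniformBit_eq_erased_add [Fintype γ] [DecidableEq γ] (hq : 0 ≤ q) (T : β → γ)
    (c : γ) :
    ent' (fun ω : Bool × β => q ω.2 / 2) (fun ω => (T ω.2, ω.1)) =
      ent' (fun ω : Bool × β => q ω.2 / 2)
          (fun ω => (T ω.2, if T ω.2 = c then none else some ω.1)) + prob' q T c := by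
  have hbit (b : Bool) (x : β) :
      prob' (fun ω : Bool × β => q ω.2 / 2) (fun ω => (T ω.2, ω.1)) (T x, b) =
        prob' q T (T x) / 2 := by
    rw [prob'_uniformBit, prob', Finset.sum_filter, Finset.sum_div]
    refine Finset.sum_congr rfl fun x' _ => ?_
    cases b <;> split_ifs <;> simp_all <;> ring
  have hmask (b : Bool) (x : β) :
      prob' (fun ω : Bool × β => q ω.2 / 2)
          (fun ω => (T ω.2, if T ω.2 = c then none else some ω.1))
          (T x, if T x = c then none else some b) =
        if T x = c then prob' q T (T x) else prob' q T (T x) / 2 := by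
    rw [prob'_uniformBit, prob', Finset.sum_filter]
    split_ifs with hx
    · refine Finset.sum_congr rfl fun x' _ => ?_
      by_cases h : T x' = T x <;> simp_all
    · rw [Finset.sum_div]
      refine Finset.sum_congr rfl fun x' _ => ?_
      by_cases h : T x' = T x <;> cases b <;> simp_all <;> ring
  have hterm (x : β) : q x * Real.logb 2 (prob' q T (T x) / 2) =
      q x * Real.logb 2 (if T x = c then prob' q T (T x) else prob' q T (T x) / 2) -
        if T x = c then q x else 0 := by
    split_ifs with hx
    · rcases (hq x).eq_or_lt with h0 | hpos
      · simp [← h0]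
      · have : prob' q T (T x) ≠ 0 := (hpos.trans_le (le_prob'_apply q hq T x)).ne'
        rw [Real.logb_div this two_ne_zero, Real.logb_self_eq_one one_lt_two]
        ring
    · ring
  rw [ent'_eq_neg_sum, ent'_eq_neg_sum]
  simp only [sum_uniformBit, hbit, hmask, add_self_div_two, hterm, Finset.sum_sub_distrib,
    ← Finset.sum_filter]
  rw [prob']
  ring

end UniformBit

section ErasedCopies

variable {ι α : Type*}

def erasedCopies (t : ι → Bool) (b : α) : ι → Option α :=
  fun j => if t j then none else some b

theorem erasedCopies_eq_iff {t t' : ι → Bool} {b b' : α} :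
    erasedCopies t b = erasedCopies t' b' ↔ t = t' ∧ (t = (fun _ => true) ∨ b = b') := by
  constructor
  · intro h
    have ht : t = t' := funext fun j => by
      have := congrFun h j
      revert this
      simp only [erasedCopies]
      cases t j <;> cases t' j <;> simp
    refine ⟨ht, or_iff_not_imp_left.2 fun hall => ?_⟩
    obtain ⟨j, hj⟩ : ∃ j, t j = false := by simpa [funext_iff] using hall
    simpa [erasedCopies, hj, ← ht] using congrFun h j
  · rintro ⟨rfl, rfl | rfl⟩ <;> rfl

end ErasedCopies

section ErasureNetwork

variable {n : ℕ} (ε : Fin n → Fin n → ℝ) (Ω : Finset (Fin n))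

def erasureWeight (i : Fin n) (r : Fin n → Bool) : ℝ :=
  ∏ j, if r j then ε i j else 1 - ε i j

theorem erasureWeight_nonneg (hε : ∀ i j, 0 ≤ ε i j ∧ ε i j ≤ 1) (i : Fin n) :
    0 ≤ erasureWeight ε i := fun _ =>
  Finset.prod_nonneg fun j _ => by split_ifs <;> linarith [hε i j]

theorem sum_erasureWeight (i : Fin n) : ∑ r, erasureWeight ε i r = 1 :=
  (Fintype.prod_sum fun j (b : Bool) => if b then ε i j else 1 - ε i j).symm.trans (by simp)

-- Links into `Ω` count as erased, so the pattern is all `true` exactly when nothing sent by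
-- the node reaches `Ωᶜ`.
def erasurePattern (r : Fin n → Bool) : Fin n → Bool := fun j => decide (j ∈ Ω) || r j

theorem prob'_erasurePattern_allErased (i : Fin n) :
    prob' (erasureWeight ε i) (erasurePattern Ω) (fun _ => true) = ∏ j ∈ Ωᶜ, ε i j := by
  refine (prob'_pi (fun j (b : Bool) => if b then ε i j else 1 - ε i j)
    (fun j b => decide (j ∈ Ω) || b) _).trans ?_
  rw [← Finset.prod_mul_prod_compl Ω, Finset.prod_eq_one fun j hj => by simp [prob', hj],
    one_mul]
  exact Finset.prod_congr rfl fun j hj => by simp [prob', Finset.mem_compl.1 hj, Finset.sum_filter]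

-- What node `i` contributes to `X_A` and to `Y_{Ωᶜ}`; `none` pads the coordinates that the
-- global random variable does not have.
def inputOn (A : Finset (Fin n)) (i : Fin n) (ω : Bool × (Fin n → Bool)) : Option Bool :=
  if i ∈ A then some ω.1 else none

def receivedAcross (i : Fin n) (ω : Bool × (Fin n → Bool)) : Fin n → Option Bool :=
  if i ∈ Ω then erasedCopies (erasurePattern Ω ω.2) ω.1 else fun _ => none

theorem condMI'_node (hε : ∀ i j, 0 ≤ ε i j ∧ ε i j ≤ 1) (i : Fin n) :
    condMI' (fun ω : Bool × (Fin n → Bool) => erasureWeight ε i ω.2 / 2)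
        (inputOn Ω i) (receivedAcross Ω i) (inputOn Ωᶜ i) =
      if i ∈ Ω then 1 - ∏ j ∈ Ωᶜ, ε i j else 0 := by
  by_cases hi : i ∈ Ω
  · have hX : Setoid.ker (inputOn Ω i) = Setoid.ker Prod.fst := by
      ext ω ω'
      simp [Setoid.ker_def, inputOn, hi]
    have hY : Setoid.ker (receivedAcross Ω i) = Setoid.ker fun ω => (erasurePattern Ω ω.2,
        if erasurePattern Ω ω.2 = (fun _ => true) then none else some ω.1) := by
      ext ω ω'
      simp only [Setoid.ker_def, receivedAcross, if_pos hi, erasedCopies_eq_iff, Prod.mk.injEq]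
      by_cases hall : erasurePattern Ω ω.2 = fun _ => true <;> aesop
    have hXY : Setoid.ker (fun ω => (inputOn Ω i ω, receivedAcross Ω i ω)) =
        Setoid.ker fun ω => (erasurePattern Ω ω.2, ω.1) := by
      ext ω ω'
      simp only [Setoid.ker_def, inputOn, receivedAcross, hi, ↓reduceIte, Prod.mk.injEq,
        Option.some.injEq, erasedCopies_eq_iff]
      tauto
    rw [show inputOn Ωᶜ i = fun _ => none from funext fun _ => if_neg (by simpa using hi),
      condMI'_const_right _ (sum_uniformBit_weight _ (sum_erasureWeight ε i)),
      ent'_congr _ hX, ent'_congr _ hY, ent'_congr _ hXY,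
      ent'_fst_uniformBit _ (sum_erasureWeight ε i),
      ent'_uniformBit_eq_erased_add _ (erasureWeight_nonneg ε hε i),
      prob'_erasurePattern_allErased, if_pos hi]
    ring
  · rw [show inputOn Ω i = fun _ => none from funext fun _ => if_neg hi, condMI'_const_left,
      if_neg hi]

def nodeEquiv (n : ℕ) :
    (Fin n → Bool × (Fin n → Bool)) ≃ (Fin n → Bool) × (Fin n → Fin n → Bool) :=
  Equiv.arrowProdEquivProdArrow _ _ _

theorem weight_comp_nodeEquiv (μ : (Fin n → Bool) × (Fin n → Fin n → Bool) → ℝ)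
    (hμ : ∀ s, μ s = (1 / 2 : ℝ) ^ n *
      ∏ i : Fin n, ∏ j : Fin n, (if s.2 i j then ε i j else 1 - ε i j)) :
    μ ∘ nodeEquiv n = fun g => ∏ i, erasureWeight ε i (g i).2 / 2 := by
  funext g
  simp [nodeEquiv, hμ, Finset.prod_div_distrib, erasureWeight]
  ring

theorem ker_restrict_comp_nodeEquiv (A : Finset (Fin n)) :
    Setoid.ker ((fun s (i : {i // i ∈ A}) => s.1 i) ∘ nodeEquiv n) =
      Setoid.ker fun g i => inputOn A i (g i) := by
  ext g g'
  simp only [Setoid.ker_def, nodeEquiv, Function.comp_apply, Equiv.arrowProdEquivProdArrow_apply,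
    funext_iff, Subtype.forall, inputOn]
  exact forall_congr' fun i => by by_cases hi : i ∈ A <;> simp [hi]

theorem ker_received_comp_nodeEquiv :
    Setoid.ker ((fun s (j : {j // j ∈ Ωᶜ}) (i : {i // i ∈ Ω}) =>
        if s.2 i j then (none : Option Bool) else some (s.1 i)) ∘ nodeEquiv n) =
      Setoid.ker fun g i => receivedAcross Ω i (g i) := by
  ext g g'
  simp only [Setoid.ker_def, nodeEquiv, Function.comp_apply, Equiv.arrowProdEquivProdArrow_apply,
    funext_iff, Subtype.forall, mem_compl, receivedAcross, ite_apply, erasedCopies, erasurePattern,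
    Bool.or_eq_true, decide_eq_true_eq]
  constructor
  · intro h i j
    by_cases hi : i ∈ Ω
    · by_cases hj : j ∈ Ω
      · simp [hi, hj]
      · simpa [hi, hj] using h j hj i hi
    · simp [hi]
  · intro h j hj i hi
    simpa [hi, hj] using h i j

end ErasureNetwork

/-- Wireless erasure network: the sample space consists of i.i.d. `Bernoulli(1/2)`
transmitted bits `s.1 i` and independent erasure indicators `s.2 i j` (erasure of
the link `i → j` with probability `ε i j`).  For a cut `Ω`, node `j ∈ Ωᶜ` receives
from each `i ∈ Ω` either `X_i` or an erasure (`none`).  Then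
`I(X_Ω ; Y_{Ωᶜ} | X_{Ωᶜ}) = Σ_{i∈Ω} (1 − Π_{j∈Ωᶜ} ε_{ij})`. -/
theorem stmt_11 {n : ℕ} (ε : Fin n → Fin n → ℝ)
    (hε : ∀ i j, 0 ≤ ε i j ∧ ε i j ≤ 1)
    (μ : (Fin n → Bool) × (Fin n → Fin n → Bool) → ℝ)
    (hμ : ∀ s, μ s = (1 / 2 : ℝ) ^ n *
      ∏ i : Fin n, ∏ j : Fin n, (if s.2 i j then ε i j else 1 - ε i j))
    (Ω : Finset (Fin n)) :
    condMI' μ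
      (fun s (i : {i // i ∈ Ω}) => s.1 i)
      (fun s (j : {j // j ∈ Ωᶜ}) (i : {i // i ∈ Ω}) =>
        if s.2 i j then (none : Option Bool) else some (s.1 i))
      (fun s (i : {i // i ∈ Ωᶜ}) => s.1 i)
      = ∑ i ∈ Ω, (1 - ∏ j ∈ Ωᶜ, ε i j) := by
  rw [← condMI'_comp_equiv μ (nodeEquiv n), weight_comp_nodeEquiv ε μ hμ,
    condMI'_congr _ (ker_restrict_comp_nodeEquiv Ω) (ker_received_comp_nodeEquiv Ω)
      (ker_restrict_comp_nodeEquiv Ωᶜ),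
    condMI'_pi (fun i (ω : Bool × (Fin n → Bool)) => erasureWeight ε i ω.2 / 2)
      (fun i ω => div_nonneg (erasureWeight_nonneg ε hε i ω.2) zero_le_two)
      (fun i => sum_uniformBit_weight _ (sum_erasureWeight ε i))]
  simp only [condMI'_node ε Ω hε, Finset.sum_ite_mem, Finset.univ_inter]
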